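/- Computable formula for W(P;μ+h): for a subgroup P ⊆ ℤ_b^{s×n}, ∑_{A ∈ P^⊥\{0}} b^{−2(μ(A)+h(A))} = −1 + |P|^{-1} ∑_{B∈P} ∏_{i=1}^s ∏_{j=1}^n (1 + η(b_{i,j}) b^{−2(j+1)}), where μ is the Dick weight, h(A) = ∑_{i,j} δ(a_{i,j}) is the Hamming weight, η(0) = b−1 and η(c) = −1 for c ≠ 0. -/

import Mathlib

/-!
Poisson summation over `P`: `B ↦ A • B` is a character of `P`, trivial exactly when `A ∈ P^⊥`,
so `|P| · 1_{P^⊥}(A) = ∑_{B ∈ P} A • B`. The weight `b^{-2(μ(A)+h(A))}` is the product over the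
entries of `w_j(a_{i,j})`, where `w_j(0) = 1` and `w_j(c) = b^{-2(j+1)}` otherwise, so its character
sum at `B` factorizes into the one-dimensional sums `∑_c w_j(c) ω_b^{c x} = 1 + η(x) b^{-2(j+1)}`.
The term `A = 0` has weight `1`, whence the `-1`.
-/

open Finset
open scoped Classical

theorem zpow_sum₀ {K ι : Type*} [CommGroupWithZero K] {x : K} (hx : x ≠ 0) (s : Finset ι)
    (f : ι → ℤ) : x ^ (∑ i ∈ s, f i) = ∏ i ∈ s, x ^ f i := by
  induction s using Finset.cons_induction with
  | empty => simp
  | cons a s ha ih => rw [sum_cons, prod_cons, zpow_add₀ hx, ih]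

theorem AddChar.map_sum_eq_prod {ι A M : Type*} [AddCommMonoid A] [CommMonoid M]
    (ψ : AddChar A M) (s : Finset ι) (f : ι → A) : ψ (∑ i ∈ s, f i) = ∏ i ∈ s, ψ (f i) := by
  induction s using Finset.cons_induction with
  | empty => simp
  | cons a s ha ih => rw [sum_cons, prod_cons, map_add_eq_mul, ih]

theorem AddChar.sum_addSubgroup_eq_ite {G R : Type*} [AddGroup G] [Fintype G] [CommRing R]
    [IsDomain R] (ψ : AddChar G R) (P : AddSubgroup G) [DecidablePred (· ∈ P)] :
    ∑ x ∈ univ.filter (· ∈ P), ψ x =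
      if ∀ x ∈ P, ψ x = 1 then (#(univ.filter (· ∈ P)) : R) else 0 := by
  have h := (ψ.compAddMonoidHom P.subtype).sum_eq_ite
  simp only [AddChar.compAddMonoidHom_apply, AddSubgroup.subtype_apply] at h
  rw [sum_subtype (p := (· ∈ P)) _ (fun x => by simp), h, Fintype.card_subtype]
  simp [AddChar.eq_zero_iff]

theorem AddChar.sum_addSubgroup_sum_mul_eq_card_mul_sum_annihilator {G H R : Type*} [Fintype G]
    [AddGroup H] [Fintype H] [CommRing R] [IsDomain R] (χ : G → AddChar H R)
    (P : AddSubgroup H) [DecidablePred (· ∈ P)] (f : G → R) :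
    ∑ B ∈ univ.filter (· ∈ P), ∑ A, f A * χ A B =
      #(univ.filter (· ∈ P)) * ∑ A ∈ univ.filter (fun A => ∀ B ∈ P, χ A B = 1), f A := by
  rw [sum_comm, sum_filter, mul_sum]
  refine sum_congr rfl fun A _ => ?_
  rw [← mul_sum, (χ A).sum_addSubgroup_eq_ite P]
  split_ifs <;> ring

theorem AddChar.sum_ite_eq_zero_mul_mulShift {R R' : Type*} [CommRing R] [Fintype R]
    [DecidableEq R] [CommRing R'] [IsDomain R'] {ψ : AddChar R R'} (hψ : ψ.IsPrimitive)
    (r : R') (x : R) :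
    ∑ c, (if c = 0 then 1 else r) * ψ (c * x) =
      1 + (if x = 0 then (Fintype.card R : R') - 1 else -1) * r := by
  have hsplit : ∀ c : R, (if c = 0 then 1 else r) * ψ (c * x) =
      r * ψ (c * x) + if c = 0 then 1 - r else 0 := by
    intro c; split_ifs with hc <;> simp [hc]
  simp only [hsplit, sum_add_distrib, ← mul_sum, AddChar.sum_mulShift x hψ, sum_ite_eq',
    mem_univ, if_true]
  split_ifs <;> ring

namespace Matrix

theorem sum_prod_prod_apply {m n α R : Type*} [Fintype m] [DecidableEq m] [Fintype n]
    [DecidableEq n] [Fintype α] [CommSemiring R] (F : m → n → α → R) :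
    ∑ A : Matrix m n α, ∏ i, ∏ j, F i j (A i j) = ∏ i, ∏ j, ∑ c, F i j c := by
  simp_rw [Fintype.prod_sum]
  rfl

section Pairing

variable {b : ℕ} [NeZero b] {m n : Type*} [Fintype m] [Fintype n]

/-- The paper's `A • B`, as a character in `B`. -/
noncomputable def zmodPairing (A : Matrix m n (ZMod b)) : AddChar (Matrix m n (ZMod b)) ℂ :=
  ZMod.stdAddChar.compAddMonoidHom <|
    AddMonoidHom.mk' (fun B => ∑ i, ∑ j, A i j * B i j) fun B C => by
      simp only [add_apply, mul_add, sum_add_distrib]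

theorem zmodPairing_apply (A B : Matrix m n (ZMod b)) :
    zmodPairing A B = ZMod.stdAddChar (∑ i, ∑ j, A i j * B i j) := rfl

theorem exp_pow_sum_val_mul_val_eq_zmodPairing (A B : Matrix m n (ZMod b)) :
    Complex.exp (2 * Real.pi * Complex.I / b) ^ (∑ i, ∑ j, (A i j).val * (B i j).val) =
      zmodPairing A B := by
  have hcast : ((∑ i, ∑ j, (A i j).val * (B i j).val : ℕ) : ZMod b) = ∑ i, ∑ j, A i j * B i j := by
    push_cast [ZMod.natCast_val, ZMod.cast_id', id]
    rfl
  rw [zmodPairing_apply, ← hcast, ZMod.stdAddChar_apply, ZMod.toCircle_natCast,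
    ← Complex.exp_nat_mul]
  ring_nf

theorem zmodPairing_apply_eq_prod (A B : Matrix m n (ZMod b)) :
    zmodPairing A B = ∏ i, ∏ j, ZMod.stdAddChar (A i j * B i j) := by
  simp only [zmodPairing_apply, AddChar.map_sum_eq_prod]

theorem sum_prod_ite_mul_zmodPairing [DecidableEq m] [DecidableEq n] (r : n → ℂ)
    (B : Matrix m n (ZMod b)) :
    ∑ A : Matrix m n (ZMod b), (∏ i, ∏ j, if A i j = 0 then 1 else r j) * zmodPairing A B =
      ∏ i, ∏ j, (1 + (if B i j = 0 then (b : ℂ) - 1 else -1) * r j) := by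
  have hfactor : ∀ A : Matrix m n (ZMod b),
      (∏ i, ∏ j, if A i j = 0 then 1 else r j) * zmodPairing A B =
        ∏ i, ∏ j, (if A i j = 0 then 1 else r j) * ZMod.stdAddChar (A i j * B i j) := by
    intro A
    rw [zmodPairing_apply_eq_prod, ← prod_mul_distrib]
    exact prod_congr rfl fun i _ => prod_mul_distrib.symm
  rw [sum_congr rfl fun A _ => hfactor A,
    sum_prod_prod_apply fun i j c => (if c = 0 then 1 else r j) * ZMod.stdAddChar (c * B i j)]
  simp_rw [AddChar.sum_ite_eq_zero_mul_mulShift (ZMod.isPrimitive_stdAddChar b), ZMod.card]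

end Pairing

end Matrix

theorem zpow_dick_add_hamming_eq_prod {K α : Type*} [CommGroupWithZero K] [Zero α] [DecidableEq α] {s n : ℕ}
    {x : K} (hx : x ≠ 0) (A : Matrix (Fin s) (Fin n) α) :
    x ^ (-2 * (∑ i, ∑ j : Fin n, ((j : ℕ) + 1 : ℤ) * (if A i j = 0 then 0 else 1) +
        ∑ i, ∑ j, (if A i j = 0 then 0 else 1))) =
      ∏ i, ∏ j : Fin n, if A i j = 0 then 1 else x ^ (-2 * (((j : ℕ) + 1 : ℤ) + 1)) := by
  have hexp : -2 * (∑ i, ∑ j : Fin n, ((j : ℕ) + 1 : ℤ) * (if A i j = 0 then 0 else 1) +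
        ∑ i, ∑ j, (if A i j = 0 then 0 else 1)) =
      ∑ i, ∑ j : Fin n, if A i j = 0 then 0 else -2 * (((j : ℕ) + 1 : ℤ) + 1) := by
    simp only [mul_add, mul_sum, ← sum_add_distrib]
    refine sum_congr rfl fun i _ => sum_congr rfl fun j _ => ?_
    split_ifs <;> ring
  rw [hexp, zpow_sum₀ hx]
  refine prod_congr rfl fun i _ => ?_
  rw [zpow_sum₀ hx]
  refine prod_congr rfl fun j _ => ?_
  split_ifs <;> simp

theorem inversion_formula_dick_hamming_weight_general (b s n : ℕ) [NeZero b]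
    (P : AddSubgroup (Matrix (Fin s) (Fin n) (ZMod b))) :
    (∑ A ∈ Finset.univ.filter
        (fun A : Matrix (Fin s) (Fin n) (ZMod b) =>
          (∀ B ∈ P,
            Complex.exp (2 * Real.pi * Complex.I / b) ^
              (∑ i : Fin s, ∑ j : Fin n, (A i j).val * (B i j).val) = 1) ∧ A ≠ 0),
        (b : ℝ) ^
          (-2 * (∑ i : Fin s, ∑ j : Fin n,
              ((j : ℕ) + 1 : ℤ) * (if A i j = 0 then 0 else 1) +
            ∑ i : Fin s, ∑ j : Fin n, (if A i j = 0 then 0 else 1))))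
      = -1 + (1 / ((Finset.univ.filter (· ∈ P)).card : ℝ)) *
          ∑ B ∈ Finset.univ.filter (· ∈ P),
            ∏ i : Fin s, ∏ j : Fin n,
              (1 + (if B i j = 0 then (b : ℝ) - 1 else -1) *
                (b : ℝ) ^ (-2 * (((j : ℕ) + 1 : ℤ) + 1))) := by
  set dual := univ.filter fun A : Matrix (Fin s) (Fin n) (ZMod b) =>
    ∀ B ∈ P, Matrix.zmodPairing A B = 1
  have hdual : univ.filter (fun A : Matrix (Fin s) (Fin n) (ZMod b) =>
      (∀ B ∈ P, Complex.exp (2 * Real.pi * Complex.I / b) ^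
        (∑ i, ∑ j, (A i j).val * (B i j).val) = 1) ∧ A ≠ 0) = dual.erase 0 := by
    ext A
    simp [dual, Matrix.exp_pow_sum_val_mul_val_eq_zmodPairing, and_comm]
  have hzero : (0 : Matrix (Fin s) (Fin n) (ZMod b)) ∈ dual :=
    mem_filter.mpr ⟨mem_univ _, fun B _ => by simp [Matrix.zmodPairing_apply]⟩
  have hb : (b : ℝ) ≠ 0 := Nat.cast_ne_zero.mpr (NeZero.ne b)
  have hP : (#(univ.filter (· ∈ P)) : ℂ) ≠ 0 :=
    Nat.cast_ne_zero.mpr (card_ne_zero_of_mem (mem_filter.mpr ⟨mem_univ _, P.zero_mem⟩))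
  have hpoisson := AddChar.sum_addSubgroup_sum_mul_eq_card_mul_sum_annihilator
    Matrix.zmodPairing P fun A => ∏ i, ∏ j : Fin n,
      if A i j = 0 then 1 else (b : ℂ) ^ (-2 * (((j : ℕ) + 1 : ℤ) + 1))
  simp only [Matrix.sum_prod_ite_mul_zmodPairing] at hpoisson
  rw [hdual, sum_erase_eq_sub hzero]
  simp only [zpow_dick_add_hamming_eq_prod hb, Matrix.zero_apply, if_true,
    mul_zero, sum_const_zero, add_zero, zpow_zero]
  apply Complex.ofReal_injective
  push_cast [apply_ite (fun x : ℝ => (x : ℂ))]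
  rw [hpoisson]
  field_simp
  ring

/-- Computable formula for `W(P;μ+h)²` where `μ` is the Dick weight and `h` the
Hamming weight. -/
theorem inversion_formula_dick_hamming_weight (b s n : ℕ) (hb : 2 ≤ b) [NeZero b]
    (P : AddSubgroup (Matrix (Fin s) (Fin n) (ZMod b))) :
    (∑ A ∈ Finset.univ.filter
        (fun A : Matrix (Fin s) (Fin n) (ZMod b) =>
          (∀ B ∈ P,
            Complex.exp (2 * Real.pi * Complex.I / b) ^
              (∑ i : Fin s, ∑ j : Fin n, (A i j).val * (B i j).val) = 1) ∧ A ≠ 0),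
        (b : ℝ) ^
          (-2 * (∑ i : Fin s, ∑ j : Fin n,
              ((j : ℕ) + 1 : ℤ) * (if A i j = 0 then 0 else 1) +
            ∑ i : Fin s, ∑ j : Fin n, (if A i j = 0 then 0 else 1))))
      = -1 + (1 / ((Finset.univ.filter (· ∈ P)).card : ℝ)) *
          ∑ B ∈ Finset.univ.filter (· ∈ P),
            ∏ i : Fin s, ∏ j : Fin n,
              (1 + (if B i j = 0 then (b : ℝ) - 1 else -1) *
                (b : ℝ) ^ (-2 * (((j : ℕ) + 1 : ℤ) + 1))) :=
  inversion_formula_dick_hamming_weight_general b s n P
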